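/- Let m ≥ 1 be an integer and let t₀, …, t_{m−1} be reals with t_j > 0 for all j and Σ_{j=0}^{m−1} t_j < Δ; set d = Δ − Σ_{j=0}^{m−1} t_j > 0. Then the one-sided limits of t_m ↦ I_m(t₀, …, t_{m−1}, t_m) at t_m = d exist, and (limit from below) − (limit from above) = a · λ²·d·exp(−λ·d) · ∏_{k=0}^{m−1} λ²·t_k·exp(−λ·t_k), which is strictly positive. -/

import Mathlib

/-!
Only the atomic term `a · ∏ F(t_k, Δ - T_k)` of `I_m` jumps at `t_m = d`: there `F(t_m, d)`
switches from the branch `λ² t e^{-λt}`, with value `λ² d e^{-λd}`, to the second branch,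
which vanishes at `t_m = d`. The integral term is continuous in `t_m` by dominated convergence
(`0 ≤ F ≤ λ`), since for `s < Δ` the point `d` lies strictly inside the second branch of
`F(·, s - T)`, because `d ≤ Δ < τ`.
-/

open Real Set Filter MeasureTheory

/-- Conditional ISI density `F t s` given time-to-live `s` of the feedback impulse. -/
noncomputable def F (lam τ t s : ℝ) : ℝ :=
  if 0 < t ∧ t < s then lam ^ 2 * t * Real.exp (-lam * t)
  else if s ≤ t ∧ t ≤ s + τ then
    (1 + lam * s) * Real.exp (-lam * s) * (lam ^ 2 * (t - s) * Real.exp (-lam * (t - s)))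
  else 0

/-- Regular part of the stationary time-to-live density. -/
noncomputable def g (lam A B s : ℝ) : ℝ := A + B * Real.exp (2 * lam * s)

/-- Weight of the singular (Dirac) part of the stationary time-to-live distribution. -/
noncomputable def aC (lam Δ : ℝ) : ℝ :=
  4 * Real.exp (2 * lam * Δ) / ((3 + 2 * lam * Δ) * Real.exp (2 * lam * Δ) + 1)

/-- `T t p q = Σ_{j=p}^{q-1} t_j` (empty sums are `0`). -/
def T {n : ℕ} (t : Fin n → ℝ) (p q : ℕ) : ℝ :=
  ∑ j : Fin n, if p ≤ (j : ℕ) ∧ (j : ℕ) < q then t j else 0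

/-- `Ilow lam Δ τ A B i t` is the term `I_i`, `0 ≤ i ≤ m-1`, of the joint ISI density. -/
noncomputable def Ilow (lam Δ τ A B : ℝ) {m : ℕ} (i : ℕ) (t : Fin (m + 1) → ℝ) : ℝ :=
  (∏ k : Fin (m + 1), if i + 1 ≤ (k : ℕ) then F lam τ (t k) (Δ - T t (i + 1) (k : ℕ)) else 1) *
    ∫ s in T t 0 i..T t 0 (i + 1),
      g lam A B s *
        ∏ k : Fin (m + 1), if (k : ℕ) ≤ i then F lam τ (t k) (s - T t 0 (k : ℕ)) else 1

/-- `Itop lam Δ τ A B t` is the term `I_m` of the joint ISI density. -/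
noncomputable def Itop (lam Δ τ A B : ℝ) {m : ℕ} (t : Fin (m + 1) → ℝ) : ℝ :=
  (∫ s in T t 0 m..Δ, g lam A B s * ∏ k : Fin (m + 1), F lam τ (t k) (s - T t 0 (k : ℕ)))
    + aC lam Δ * ∏ k : Fin (m + 1), F lam τ (t k) (Δ - T t 0 (k : ℕ))

/-- `J lam Δ τ A B t = Σ_{i=0}^{m} I_i(t)`, the joint density of `m+1` consecutive ISIs. -/
noncomputable def J (lam Δ τ A B : ℝ) {m : ℕ} (t : Fin (m + 1) → ℝ) : ℝ :=
  (∑ i ∈ Finset.range m, Ilow lam Δ τ A B i t) + Itop lam Δ τ A B t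

open Topology

lemma one_add_mul_exp_neg_le_one (u : ℝ) : (1 + u) * exp (-u) ≤ 1 := by
  rw [exp_neg, ← div_eq_mul_inv, div_le_one (exp_pos u)]
  linarith [add_one_le_exp u]

lemma mul_exp_neg_le_one (u : ℝ) : u * exp (-u) ≤ 1 :=
  (mul_exp_neg_le_exp_neg_one u).trans (exp_le_one_iff.2 (by norm_num))

section F

variable {lam τ t s : ℝ}

lemma F_of_lt (ht : 0 < t) (hts : t < s) : F lam τ t s = lam ^ 2 * t * exp (-lam * t) :=
  if_pos ⟨ht, hts⟩

lemma F_of_le (hst : s ≤ t) (hts : t ≤ s + τ) :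
    F lam τ t s = (1 + lam * s) * exp (-lam * s) * (lam ^ 2 * (t - s) * exp (-lam * (t - s))) := by
  rw [F, if_neg fun h => h.2.not_ge hst, if_pos ⟨hst, hts⟩]

lemma F_nonneg (hlam : 0 ≤ lam) (hs : 0 ≤ s) : 0 ≤ F lam τ t s := by
  unfold F
  split_ifs with h₁ h₂
  · have := h₁.1
    positivity
  · have : 0 ≤ t - s := sub_nonneg.2 h₂.1
    have : 0 ≤ 1 + lam * s := by positivity
    positivity
  · rfl

lemma F_le (hlam : 0 ≤ lam) : F lam τ t s ≤ lam := by
  have key : ∀ u, lam ^ 2 * u * exp (-lam * u) ≤ lam := fun u => by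
    calc lam ^ 2 * u * exp (-lam * u) = lam * (lam * u * exp (-(lam * u))) := by ring_nf
      _ ≤ lam * 1 := mul_le_mul_of_nonneg_left (mul_exp_neg_le_one _) hlam
      _ = lam := mul_one lam
  unfold F
  split_ifs with h₁ h₂
  · exact key t
  · have hb : 0 ≤ lam ^ 2 * (t - s) * exp (-lam * (t - s)) := by
      have : 0 ≤ t - s := sub_nonneg.2 h₂.1
      positivity
    have ha : (1 + lam * s) * exp (-lam * s) ≤ 1 := by
      simpa only [neg_mul] using one_add_mul_exp_neg_le_one (lam * s)
    exact (mul_le_of_le_one_left hb ha).trans (key _)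
  · exact hlam

lemma abs_F_le (hlam : 0 ≤ lam) (hs : 0 ≤ s) : |F lam τ t s| ≤ lam := by
  rw [abs_of_nonneg (F_nonneg hlam hs)]
  exact F_le hlam

lemma measurable_F (lam τ t : ℝ) : Measurable (F lam τ t) :=
  Measurable.ite ((MeasurableSet.const _).inter (measurableSet_lt measurable_const measurable_id))
    measurable_const
    (Measurable.ite ((measurableSet_le measurable_id measurable_const).inter
      (measurableSet_le measurable_const (measurable_id.add_const _))) (by fun_prop)
      measurable_const)

lemma continuousAt_F (hst : s < t) (hts : t < s + τ) :
    ContinuousAt (fun x => F lam τ x s) t := by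
  have hbranch : ContinuousAt (fun x => (1 + lam * s) * exp (-lam * s) *
      (lam ^ 2 * (x - s) * exp (-lam * (x - s)))) t := by fun_prop
  refine hbranch.congr ?_
  filter_upwards [Ioo_mem_nhds hst hts] with x hx using (F_of_le hx.1.le hx.2.le).symm

lemma tendsto_F_nhdsLT (hs : 0 < s) :
    Tendsto (fun x => F lam τ x s) (𝓝[<] s) (𝓝 (lam ^ 2 * s * exp (-lam * s))) := by
  have hbranch : Tendsto (fun x => lam ^ 2 * x * exp (-lam * x)) (𝓝[<] s)
      (𝓝 (lam ^ 2 * s * exp (-lam * s))) :=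
    ((by fun_prop : Continuous fun x => lam ^ 2 * x * exp (-lam * x)).tendsto s).mono_left
      nhdsWithin_le_nhds
  refine hbranch.congr' ?_
  filter_upwards [Ioo_mem_nhdsLT hs] with x hx using (F_of_lt hx.1 hx.2).symm

lemma tendsto_F_nhdsGT (hτ : 0 < τ) : Tendsto (fun x => F lam τ x s) (𝓝[>] s) (𝓝 0) := by
  have hbranch : Tendsto (fun x => (1 + lam * s) * exp (-lam * s) *
      (lam ^ 2 * (x - s) * exp (-lam * (x - s)))) (𝓝[>] s) (𝓝 0) := by
    have := (by fun_prop : Continuous fun x => (1 + lam * s) * exp (-lam * s) *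
      (lam ^ 2 * (x - s) * exp (-lam * (x - s)))).tendsto s
    simpa using this.mono_left nhdsWithin_le_nhds
  refine hbranch.congr' ?_
  filter_upwards [Ioo_mem_nhdsGT (lt_add_of_pos_right s hτ)] with x hx
  exact (F_of_le hx.1.le hx.2.le).symm

lemma continuousAt_intervalIntegral_mul_F {φ : ℝ → ℝ} {a b C : ℝ} (hlam : 0 ≤ lam)
    (hab : a ≤ b) (hτ : b - a < τ) (hφ : AEStronglyMeasurable φ (volume.restrict (Ioc a b)))
    (hφC : ∀ s ∈ Ioc a b, |φ s| ≤ C) :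
    ContinuousAt (fun x => ∫ s in a..b, φ s * F lam τ x (s - a)) (b - a) := by
  rw [← uIoc_of_le hab] at hφ
  refine intervalIntegral.continuousAt_of_dominated_interval (bound := fun _ => C * lam)
    (Eventually.of_forall fun x => ?_) (Eventually.of_forall fun x => ?_)
    intervalIntegrable_const ?_
  · exact hφ.mul ((measurable_F lam τ x).comp (measurable_sub_const a)).aestronglyMeasurable
  · refine ae_of_all _ fun s hs => ?_
    rw [uIoc_of_le hab] at hs
    rw [norm_mul, norm_eq_abs, norm_eq_abs]
    exact mul_le_mul (hφC s hs) (abs_F_le hlam (sub_nonneg.2 hs.1.le)) (abs_nonneg _)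
      ((abs_nonneg _).trans (hφC s hs))
  · filter_upwards [Measure.ae_ne volume b] with s hsb hs
    rw [uIoc_of_le hab] at hs
    exact continuousAt_const.mul
      (continuousAt_F (by linarith [lt_of_le_of_ne hs.2 hsb]) (by linarith [hs.1]))

end F

section T

variable {n : ℕ} (t : Fin n → ℝ)

lemma T_nonneg (ht : ∀ j, 0 ≤ t j) (k : ℕ) : 0 ≤ T t 0 k :=
  Finset.sum_nonneg fun j _ => by split_ifs; exacts [ht j, le_rfl]

lemma T_mono (ht : ∀ j, 0 ≤ t j) {k q : ℕ} (hkq : k ≤ q) : T t 0 k ≤ T t 0 q :=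
  Finset.sum_le_sum fun j _ => by
    split_ifs with h₁ h₂
    · exact le_rfl
    · exact absurd ⟨h₁.1, h₁.2.trans_le hkq⟩ h₂
    · exact ht j
    · exact le_rfl

lemma T_succ {k : ℕ} (hk : k < n) : T t 0 (k + 1) = T t 0 k + t ⟨k, hk⟩ := by
  have hsplit : ∀ j : Fin n, (if 0 ≤ (j : ℕ) ∧ (j : ℕ) < k + 1 then t j else 0) =
      (if 0 ≤ (j : ℕ) ∧ (j : ℕ) < k then t j else 0) +
        if j = ⟨k, hk⟩ then t j else 0 := by
    rintro ⟨j, hj⟩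
    simp only [Fin.ext_iff]
    split_ifs <;> first | ring1 | (exfalso; omega)
  rw [T, Finset.sum_congr rfl fun j _ => hsplit j, Finset.sum_add_distrib, Finset.sum_ite_eq']
  simp [T]

lemma T_snoc (x : ℝ) {k : ℕ} (hk : k ≤ n) : T (Fin.snoc t x) 0 k = T t 0 k := by
  have : ¬ n < k := by omega
  simp [T, Fin.sum_univ_castSucc, Fin.snoc_castSucc, this]

end T

/-- Joint conditional density of `n` consecutive intervals, given time-to-live `s` at the start
of the first one. -/
noncomputable def Fprod (lam τ : ℝ) {n : ℕ} (t : Fin n → ℝ) (s : ℝ) : ℝ :=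
  ∏ k : Fin n, F lam τ (t k) (s - T t 0 k)

section Fprod

variable {lam τ : ℝ} {n : ℕ} (t : Fin n → ℝ)

lemma Fprod_snoc (x s : ℝ) :
    Fprod lam τ (Fin.snoc t x) s = Fprod lam τ t s * F lam τ x (s - T t 0 n) := by
  rw [Fprod, Fin.prod_univ_castSucc, Fin.snoc_last, Fin.val_last, T_snoc t x le_rfl]
  congr 1
  refine Finset.prod_congr rfl fun k _ => ?_
  rw [Fin.snoc_castSucc, Fin.val_castSucc, T_snoc t x k.2.le]

lemma measurable_Fprod : Measurable (Fprod lam τ t) :=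
  Finset.measurable_prod _ fun k _ => (measurable_F lam τ (t k)).comp (measurable_sub_const _)

lemma abs_Fprod_le (hlam : 0 ≤ lam) (ht : ∀ j, 0 ≤ t j) {s : ℝ} (hs : T t 0 n ≤ s) :
    |Fprod lam τ t s| ≤ lam ^ n := by
  rw [Fprod, Finset.abs_prod]
  calc ∏ k : Fin n, |F lam τ (t k) (s - T t 0 k)| ≤ ∏ _k : Fin n, lam :=
        Finset.prod_le_prod (fun _ _ => abs_nonneg _) fun k _ =>
          abs_F_le hlam (sub_nonneg.2 ((T_mono t ht k.2.le).trans hs))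
    _ = lam ^ n := by simp

lemma Fprod_of_T_lt (ht : ∀ j, 0 < t j) {s : ℝ} (hs : T t 0 n < s) :
    Fprod lam τ t s = ∏ k : Fin n, lam ^ 2 * t k * exp (-lam * t k) := by
  refine Finset.prod_congr rfl fun k _ => F_of_lt (ht k) ?_
  have hsucc := T_succ t k.2
  have hle := T_mono t (fun j => (ht j).le) k.2
  linarith

end Fprod

lemma Itop_snoc (lam Δ τ A B : ℝ) {n : ℕ} (t : Fin n → ℝ) (x : ℝ) :
    Itop lam Δ τ A B (Fin.snoc t x) =
      (∫ s in T t 0 n..Δ, g lam A B s * Fprod lam τ t s * F lam τ x (s - T t 0 n)) +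
        aC lam Δ * Fprod lam τ t Δ * F lam τ x (Δ - T t 0 n) := by
  simp only [Itop, T_snoc t x le_rfl]
  change (∫ s in T t 0 n..Δ, g lam A B s * Fprod lam τ (Fin.snoc t x) s) +
    aC lam Δ * Fprod lam τ (Fin.snoc t x) Δ = _
  simp only [Fprod_snoc, mul_assoc]

lemma continuousAt_integral_g_mul_Fprod_mul_F {lam τ A B Δ : ℝ} {n : ℕ} {t : Fin n → ℝ}
    (hlam : 0 ≤ lam) (ht : ∀ j, 0 ≤ t j) (hΔ : T t 0 n ≤ Δ) (hτ : Δ - T t 0 n < τ) :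
    ContinuousAt
      (fun x => ∫ s in T t 0 n..Δ, g lam A B s * Fprod lam τ t s * F lam τ x (s - T t 0 n))
      (Δ - T t 0 n) := by
  have hg : Continuous (g lam A B) := by unfold g; fun_prop
  obtain ⟨C, hC⟩ :=
    isCompact_Icc.exists_bound_of_continuousOn (hg.continuousOn (s := Icc (T t 0 n) Δ))
  refine continuousAt_intervalIntegral_mul_F (C := C * lam ^ n) hlam hΔ hτ
    (hg.measurable.mul (measurable_Fprod t)).aestronglyMeasurable fun s hs => ?_
  have hgs := hC s (Ioc_subset_Icc_self hs)
  rw [norm_eq_abs] at hgs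
  rw [abs_mul]
  exact mul_le_mul hgs (abs_Fprod_le t hlam ht hs.1.le) (abs_nonneg _) ((abs_nonneg _).trans hgs)

lemma tendsto_Itop_snoc {lam Δ τ A B L : ℝ} {n : ℕ} {t : Fin n → ℝ} {l : Filter ℝ}
    (hlam : 0 ≤ lam) (ht : ∀ j, 0 ≤ t j) (hΔ : T t 0 n ≤ Δ) (hτ : Δ - T t 0 n < τ)
    (hl : l ≤ 𝓝 (Δ - T t 0 n))
    (hF : Tendsto (fun x => F lam τ x (Δ - T t 0 n)) l (𝓝 L)) :
    Tendsto (fun x => Itop lam Δ τ A B (Fin.snoc t x)) l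
      (𝓝 ((∫ s in T t 0 n..Δ,
          g lam A B s * Fprod lam τ t s * F lam τ (Δ - T t 0 n) (s - T t 0 n)) +
        aC lam Δ * Fprod lam τ t Δ * L)) := by
  simp_rw [Itop_snoc]
  exact ((continuousAt_integral_g_mul_Fprod_mul_F hlam ht hΔ hτ).tendsto.mono_left hl).add
    (hF.const_mul _)

lemma aC_pos {lam Δ : ℝ} (hlam : 0 ≤ lam) (hΔ : 0 ≤ Δ) : 0 < aC lam Δ := by
  unfold aC
  positivity

theorem stmt10_general (lam Δ τ A B : ℝ) (hlam : 0 < lam) (hΔτ : Δ < τ)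
    (m : ℕ) (t : Fin m → ℝ)
    (hpos : ∀ j, 0 < t j) (hsum : T t 0 m < Δ) :
    0 < Δ - T t 0 m ∧
    ∃ L₁ L₂ : ℝ,
      Filter.Tendsto (fun x => Itop lam Δ τ A B (Fin.snoc t x))
        (nhdsWithin (Δ - T t 0 m) (Set.Iio (Δ - T t 0 m))) (nhds L₁) ∧
      Filter.Tendsto (fun x => Itop lam Δ τ A B (Fin.snoc t x))
        (nhdsWithin (Δ - T t 0 m) (Set.Ioi (Δ - T t 0 m))) (nhds L₂) ∧
      L₁ - L₂ =
        aC lam Δ * (lam ^ 2 * (Δ - T t 0 m) * Real.exp (-lam * (Δ - T t 0 m))) *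
          ∏ k : Fin m, lam ^ 2 * t k * Real.exp (-lam * t k) ∧
      0 < L₁ - L₂ := by
  have ht : ∀ j, 0 ≤ t j := fun j => (hpos j).le
  have hS := T_nonneg t ht m
  have hd : 0 < Δ - T t 0 m := sub_pos.2 hsum
  have hτ : Δ - T t 0 m < τ := by linarith
  have hjump :
      aC lam Δ * Fprod lam τ t Δ * (lam ^ 2 * (Δ - T t 0 m) * exp (-lam * (Δ - T t 0 m))) =
        aC lam Δ * (lam ^ 2 * (Δ - T t 0 m) * exp (-lam * (Δ - T t 0 m))) *
          ∏ k : Fin m, lam ^ 2 * t k * exp (-lam * t k) := by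
    rw [Fprod_of_T_lt t hpos hsum]
    ring
  refine ⟨hd, _, _,
    tendsto_Itop_snoc (A := A) (B := B) hlam.le ht hsum.le hτ nhdsWithin_le_nhds
      (tendsto_F_nhdsLT hd),
    tendsto_Itop_snoc hlam.le ht hsum.le hτ nhdsWithin_le_nhds
      (tendsto_F_nhdsGT (by linarith)), ?_, ?_⟩
  all_goals rw [mul_zero, add_zero, add_sub_cancel_left, hjump]
  exact mul_pos (mul_pos (aC_pos hlam.le (by linarith)) (by positivity))
    (Finset.prod_pos fun k _ => by have := hpos k; positivity)

/-- jump of `t_m ↦ I_m(t₀,…,t_{m−1},t_m)` across `t_m = d = Δ − Σ_{j=0}^{m−1} t_j`,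
equal to `a λ² d e^{−λd} ∏_{k<m} λ² t_k e^{−λ t_k} > 0`. -/
theorem stmt10 (lam Δ τ A B : ℝ) (hlam : 0 < lam) (hΔ : 0 < Δ) (hΔτ : Δ < τ)
    (m : ℕ) (hm : 1 ≤ m) (t : Fin m → ℝ)
    (hpos : ∀ j, 0 < t j) (hsum : T t 0 m < Δ) :
    0 < Δ - T t 0 m ∧
    ∃ L₁ L₂ : ℝ,
      Filter.Tendsto (fun x => Itop lam Δ τ A B (Fin.snoc t x))
        (nhdsWithin (Δ - T t 0 m) (Set.Iio (Δ - T t 0 m))) (nhds L₁) ∧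
      Filter.Tendsto (fun x => Itop lam Δ τ A B (Fin.snoc t x))
        (nhdsWithin (Δ - T t 0 m) (Set.Ioi (Δ - T t 0 m))) (nhds L₂) ∧
      L₁ - L₂ =
        aC lam Δ * (lam ^ 2 * (Δ - T t 0 m) * Real.exp (-lam * (Δ - T t 0 m))) *
          ∏ k : Fin m, lam ^ 2 * t k * Real.exp (-lam * t k) ∧
      0 < L₁ - L₂ :=
  stmt10_general lam Δ τ A B hlam hΔτ m t hpos hsum
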